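/- The Λ-duplicate D is scattered: every non-empty subset E ⊆ D contains a point which is isolated in the subspace topology of E. (Explicitly, if t ∈ Λ is minimal subject to (t,i) ∈ E for some i ∈ {1,−1}, then W(0,t,i) ∩ E = {(t,i)}.) -/

import Mathlib

/-- An element of Kurepa's tree `Λ`: an injective function `t : α → ω` with countable
ordinal domain `α` and coinfinite range.  The function is represented as a total function
on ordinals which takes the junk value `0` outside of the domain. -/
structure Lambda : Type 1 where
  toFun : Ordinal.{0} → ℕ
  dom : Ordinal.{0}
  countable : dom.card ≤ Cardinal.aleph0
  inj : ∀ β γ, β < dom → γ < dom → toFun β = toFun γ → β = γ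
  coinfinite : {n : ℕ | ∀ β, β < dom → toFun β ≠ n}.Infinite
  junk : ∀ β, ¬ β < dom → toFun β = 0

/-- The tree order on `Λ`: `s ≼ t` iff `t` extends `s`. -/
def Lambda.le (s t : Lambda) : Prop :=
  s.dom ≤ t.dom ∧ ∀ β, β < s.dom → s.toFun β = t.toFun β

/-- The strict tree order on `Λ`. -/
def Lambda.lt (s t : Lambda) : Prop := Lambda.le s t ∧ s ≠ t

/-- `r ≺ s` for `r ∈ Λ ∪ {0}` (`none` plays the role of the extra least element `0`). -/
def precLt : Option Lambda → Lambda → Prop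
  | none, _ => True
  | some r, s => Lambda.lt r s

/-- The interval `(r, t] = {s ∈ Λ : r ≺ s ≼ t}`, with `r ∈ Λ ∪ {0}`. -/
def lamIoc (r : Option Lambda) (t : Lambda) : Set Lambda :=
  {s | precLt r s ∧ Lambda.le s t}

/-- The position of the minimum of `t` on the ordinal interval `[δ, β)`. -/
noncomputable def minPos (t : Ordinal.{0} → ℕ) (δ β : Ordinal.{0}) : Ordinal.{0} :=
  sInf {ξ | δ ≤ ξ ∧ ξ < β ∧ ∀ η, δ ≤ η → η < β → t ξ ≤ t η}

lemma minPos_lt (t : Ordinal.{0} → ℕ) {δ β : Ordinal.{0}} (h : δ < β) : minPos t δ β < β := by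
  have hne : {ξ : Ordinal.{0} | δ ≤ ξ ∧ ξ < β ∧ ∀ η, δ ≤ η → η < β → t ξ ≤ t η}.Nonempty := by
    have h1 : {n : ℕ | ∃ ξ : Ordinal.{0}, δ ≤ ξ ∧ ξ < β ∧ t ξ = n}.Nonempty :=
      ⟨t δ, δ, le_refl _, h, rfl⟩
    obtain ⟨ξ, hξ1, hξ2, hξ3⟩ := Nat.sInf_mem h1
    refine ⟨ξ, hξ1, hξ2, fun η h1' h2' => ?_⟩
    rw [hξ3]
    exact Nat.sInf_le ⟨η, h1', h2', rfl⟩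
  obtain ⟨ξ, hξ⟩ := hne
  calc minPos t δ β ≤ ξ := csInf_le (OrderBot.bddBelow _) hξ
    _ < β := hξ.2.1

/-- The sequence `τ` computed from the starting ordinal `β₀` downwards: `τ` is obtained by
repeatedly passing from `β` to the position of the minimum of `t` on `[δ, β)`, stopping upon
reaching `δ`.  The resulting finite sequence `(β_k, …, β_1)` is recorded as a list in the
order `[β_k, …, β_1]` (so concatenation of the lists corresponds to `⌢`). -/
noncomputable def tauFrom (δ : Ordinal.{0}) (t : Ordinal.{0} → ℕ) : Ordinal.{0} → List Ordinal.{0} :=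
  WellFounded.fix wellFounded_lt
    (fun β IH => if h : δ < β then IH (minPos t δ β) (minPos_lt t h) ++ [minPos t δ β] else [])

/-- The finite sequence `τ(s,t)` of ordinals, for `s ≼ t` in `Λ`. -/
noncomputable def tau (s t : Lambda) : List Ordinal.{0} :=
  tauFrom s.dom t.toFun t.dom

/-- `ℓ(s,t)`, the length of `τ(s,t)`. -/
noncomputable def ell (s t : Lambda) : ℕ := (tau s t).length

/-- The underlying set of the `Λ`-duplicate: `D = Λ × {1, -1}`. -/
abbrev Dup : Type 1 := Lambda × ℤˣ

/-- The basic open sets `W(r,t,i)` of the `Λ`-duplicate. -/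
noncomputable def Wset (r : Option Lambda) (t : Lambda) (i : ℤˣ) : Set Dup :=
  {q | q.1 ∈ lamIoc r t ∧ q.2 = (-1) ^ ell q.1 t * i}

/-- The collection of all basic open sets `W(r,t,i)` with `r ≺ t`. -/
noncomputable def WBasis : Set (Set Dup) :=
  {S | ∃ (r : Option Lambda) (t : Lambda) (i : ℤˣ), precLt r t ∧ S = Wset r t i}

/-- The topology of the `Λ`-duplicate, generated by the basic sets `W(r,t,i)`. -/
noncomputable instance : TopologicalSpace Dup := TopologicalSpace.generateFrom WBasis

/-! A point `(t, i)` of `E` with `t` minimal for the tree order is isolated in `E` by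
`W(0, t, i)`: this set only contains points `(s, j)` with `s ≼ t`, and at `s = t` only `(t, i)`,
since `τ(t, t)` is empty. Minimal elements exist because a strict extension has a strictly
larger domain, so the tree order is well founded. -/

namespace Lambda

lemma eq_of_le_of_dom_eq {s t : Lambda} (hle : s.le t) (hdom : s.dom = t.dom) : s = t := by
  obtain ⟨toFun, dom, _, _, _, junk⟩ := s
  obtain ⟨toFun', dom', _, _, _, junk'⟩ := t
  subst hdom
  have hfun : toFun = toFun' := funext fun β => by
    by_cases hβ : β < dom
    · exact hle.2 β hβ
    · rw [junk β hβ, junk' β hβ]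
  subst hfun
  rfl

lemma le_refl (t : Lambda) : t.le t := ⟨le_rfl, fun _ _ => rfl⟩

lemma lt.dom_lt {s t : Lambda} (h : s.lt t) : s.dom < t.dom :=
  h.1.1.lt_of_ne fun hdom => h.2 (eq_of_le_of_dom_eq h.1 hdom)

lemma wellFounded_lt : WellFounded Lambda.lt :=
  Subrelation.wf (fun h => lt.dom_lt h) (InvImage.wf Lambda.dom Ordinal.lt_wf)

end Lambda

lemma tauFrom_self (δ : Ordinal.{0}) (t : Ordinal.{0} → ℕ) : tauFrom δ t δ = [] := by
  rw [tauFrom, WellFounded.fix_eq, dif_neg (lt_irrefl δ)]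

lemma ell_self (t : Lambda) : ell t t = 0 := by
  rw [ell, tau, tauFrom_self, List.length_nil]

lemma isOpen_Wset {r : Option Lambda} {t : Lambda} (hr : precLt r t) (i : ℤˣ) :
    IsOpen (Wset r t i) :=
  TopologicalSpace.GenerateOpen.basic _ ⟨r, t, i, hr, rfl⟩

lemma Wset_none_inter_eq_singleton (E : Set Dup) (t : Lambda) (i : ℤˣ) (hti : (t, i) ∈ E)
    (hmin : ∀ (s : Lambda) (j : ℤˣ), (s, j) ∈ E → ¬ Lambda.lt s t) :
    Wset none t i ∩ E = {(t, i)} := by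
  ext ⟨s, j⟩
  simp only [Set.mem_inter_iff, Set.mem_singleton_iff, Wset, lamIoc, Set.mem_ofPred_eq,
    Prod.mk.injEq]
  constructor
  · rintro ⟨⟨⟨-, hst⟩, hj⟩, hsj⟩
    obtain rfl : s = t := by_contra fun hne => hmin s j hsj ⟨hst, hne⟩
    rw [ell_self, pow_zero, one_mul] at hj
    exact ⟨rfl, hj⟩
  · rintro ⟨rfl, rfl⟩
    exact ⟨⟨⟨trivial, s.le_refl⟩, by rw [ell_self, pow_zero, one_mul]⟩, hti⟩

/-- The `Λ`-duplicate `D` is scattered: every nonempty `E ⊆ D` has a relatively isolated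
point.  Explicitly, if `t` is minimal subject to `(t,i) ∈ E` for some `i`, then
`W(0,t,i) ∩ E = {(t,i)}`. -/
theorem dup_scattered :
    (∀ E : Set Dup, E.Nonempty → ∃ x ∈ E, ∃ U : Set Dup, IsOpen U ∧ U ∩ E = {x}) ∧
    ∀ (E : Set Dup) (t : Lambda) (i : ℤˣ), (t, i) ∈ E →
      (∀ (s : Lambda) (j : ℤˣ), (s, j) ∈ E → ¬ Lambda.lt s t) →
      Wset none t i ∩ E = {(t, i)} := by
  refine ⟨fun E hE => ?_, Wset_none_inter_eq_singleton⟩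
  obtain ⟨⟨t, i⟩, hti, hmin⟩ := (InvImage.wf Prod.fst Lambda.wellFounded_lt).has_min E hE
  exact ⟨(t, i), hti, Wset none t i, isOpen_Wset (r := none) trivial i,
    Wset_none_inter_eq_singleton E t i hti fun s j hsj => hmin (s, j) hsj⟩
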